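/- arXiv:2401.03566 — 2 statements merged into one kernel-verified Lean document; each statement's English description precedes it below -/
import Mathlib

section
/- Let Δ be the root system of type A_n realized as {e_i - e_j : 0 ≤ i ≠ j ≤ n} ⊆ ℤ^{n+1}. Then the sets Δ_i := {e_j - e_i : 0 ≤ j ≤ n, j ≠ i} for 0 ≤ i ≤ n form a partition of Δ into n+1 parts such that each Δ_i is closed and each union Δ_i ∪ Δ_j (i ≠ j) is closed. -/
/-- Standard basis vector `e i` in `ℤ^{n+1}`. -/
def eb {n : ℕ} (i : Fin n) : Fin n → ℤ := fun k => if k = i then 1 else 0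

/-- The root system of type `A_n`, realized as `{e_i - e_j : i ≠ j}` in `ℤ^{n+1}`. -/
def rootsA (n : ℕ) : Set (Fin (n + 1) → ℤ) :=
  {v | ∃ i j : Fin (n + 1), i ≠ j ∧ v = eb i - eb j}

/-- A subset `S` of a root system `Δ` is closed if `α, β ∈ S` and `α + β ∈ Δ`
imply `α + β ∈ S`. -/
def RootClosed (Δ S : Set (Fin (n + 1) → ℤ)) : Prop :=
  ∀ a ∈ S, ∀ b ∈ S, a + b ∈ Δ → a + b ∈ S

/-- The `i`-th part of the row partition: `Δ_i = {e_j - e_i : j ≠ i}`. -/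
def rowPart (n : ℕ) (i : Fin (n + 1)) : Set (Fin (n + 1) → ℤ) :=
  {v | ∃ j : Fin (n + 1), j ≠ i ∧ v = eb j - eb i}

/-!
A root `e_p - e_q` of `A_n` has all coordinates `≥ -1`, and exactly one coordinate equal to `-1`,
namely at `q`. A sum of two roots of `Δ_i` has coordinate `-2` at `i`, so it is never a root.
For `α = e_k - e_i ∈ Δ_i` and `β = e_l - e_j ∈ Δ_j`, the sum is `e_l - e_i ∈ Δ_i` if `k = j`,
`e_k - e_j ∈ Δ_j` if `l = i`, and otherwise has coordinate `-1` at both `i` and `j`, so is not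
a root.
-/

section StandardBasis

variable {m : ℕ}

@[simp]
lemma eb_apply (i k : Fin m) : eb i k = if k = i then 1 else 0 := rfl

lemma eb_sub_eb_apply_eq_neg_one_iff {i j : Fin m} (hij : i ≠ j) (k : Fin m) :
    (eb i - eb j) k = -1 ↔ k = j := by
  simp only [Pi.sub_apply, eb_apply]
  split_ifs <;> simp_all

lemma neg_one_le_eb_sub_eb_apply (i j k : Fin m) : -1 ≤ (eb i - eb j) k := by
  simp only [Pi.sub_apply, eb_apply]
  split_ifs <;> norm_num

end StandardBasis

section Roots

variable {n : ℕ} {v : Fin (n + 1) → ℤ}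

lemma neg_one_le_apply_of_mem_rootsA (hv : v ∈ rootsA n) (k : Fin (n + 1)) : -1 ≤ v k := by
  obtain ⟨p, q, -, rfl⟩ := hv
  exact neg_one_le_eb_sub_eb_apply p q k

lemma exists_apply_eq_neg_one_of_mem_rootsA (hv : v ∈ rootsA n) : ∃ k, v k = -1 := by
  obtain ⟨p, q, hpq, rfl⟩ := hv
  exact ⟨q, (eb_sub_eb_apply_eq_neg_one_iff hpq q).2 rfl⟩

lemma eq_of_apply_eq_neg_one_of_mem_rootsA (hv : v ∈ rootsA n) {i j : Fin (n + 1)}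
    (hi : v i = -1) (hj : v j = -1) : i = j := by
  obtain ⟨p, q, hpq, rfl⟩ := hv
  rw [eb_sub_eb_apply_eq_neg_one_iff hpq] at hi hj
  rw [hi, hj]

end Roots

section RowPartition

variable {n : ℕ}

lemma iUnion_rowPart : (⋃ i, rowPart n i) = rootsA n := by
  ext v
  simp only [Set.mem_iUnion, rowPart, rootsA, Set.mem_ofPred_eq]
  constructor
  · rintro ⟨i, j, hji, rfl⟩
    exact ⟨j, i, hji, rfl⟩
  · rintro ⟨i, j, hij, rfl⟩
    exact ⟨j, i, hij, rfl⟩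

lemma pairwise_disjoint_rowPart : Pairwise fun i j => Disjoint (rowPart n i) (rowPart n j) := by
  intro i j hij
  rw [Set.disjoint_left]
  rintro v ⟨k, hki, rfl⟩ ⟨l, hlj, hv⟩
  have hvi : (eb k - eb i) i = -1 := (eb_sub_eb_apply_eq_neg_one_iff hki i).2 rfl
  rw [hv, eb_sub_eb_apply_eq_neg_one_iff hlj] at hvi
  exact hij hvi

lemma eb_sub_add_eb_sub_notMem_rootsA {i j k : Fin (n + 1)} (hj : j ≠ i) (hk : k ≠ i) :
    eb j - eb i + (eb k - eb i) ∉ rootsA n := by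
  intro hroot
  have := neg_one_le_apply_of_mem_rootsA hroot i
  simp [hj.symm, hk.symm] at this

lemma rootClosed_rowPart (i : Fin (n + 1)) : RootClosed (rootsA n) (rowPart n i) := by
  rintro _ ⟨j, hj, rfl⟩ _ ⟨k, hk, rfl⟩ hroot
  exact absurd hroot (eb_sub_add_eb_sub_notMem_rootsA hj hk)

lemma add_mem_rowPart_union_of_mem_rootsA {i j k l : Fin (n + 1)} (hij : i ≠ j)
    (hk : k ≠ i) (hl : l ≠ j) (hroot : eb k - eb i + (eb l - eb j) ∈ rootsA n) :
    eb k - eb i + (eb l - eb j) ∈ rowPart n i ∪ rowPart n j := by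
  by_cases hkj : k = j
  · subst hkj
    have hsum : eb k - eb i + (eb l - eb k) = eb l - eb i := by abel
    rw [hsum] at hroot ⊢
    have hli : l ≠ i := by
      rintro rfl
      obtain ⟨q, hq⟩ := exists_apply_eq_neg_one_of_mem_rootsA hroot
      simp at hq
    exact Or.inl ⟨l, hli, rfl⟩
  by_cases hli : l = i
  · subst hli
    have hsum : eb k - eb l + (eb l - eb j) = eb k - eb j := by abel
    rw [hsum]
    exact Or.inr ⟨k, hkj, rfl⟩
  have hi : (eb k - eb i + (eb l - eb j)) i = -1 := by simp [hk.symm, Ne.symm hli, hij]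
  have hj : (eb k - eb i + (eb l - eb j)) j = -1 := by simp [Ne.symm hkj, hl.symm, hij.symm]
  exact absurd (eq_of_apply_eq_neg_one_of_mem_rootsA hroot hi hj) hij

lemma rootClosed_rowPart_union {i j : Fin (n + 1)} (hij : i ≠ j) :
    RootClosed (rootsA n) (rowPart n i ∪ rowPart n j) := by
  rintro _ (⟨k, hk, rfl⟩ | ⟨k, hk, rfl⟩) _ (⟨l, hl, rfl⟩ | ⟨l, hl, rfl⟩) hroot
  · exact absurd hroot (eb_sub_add_eb_sub_notMem_rootsA hk hl)
  · exact add_mem_rowPart_union_of_mem_rootsA hij hk hl hroot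
  · rw [add_comm (eb k - eb j)] at hroot ⊢
    exact add_mem_rowPart_union_of_mem_rootsA hij hl hk hroot
  · exact absurd hroot (eb_sub_add_eb_sub_notMem_rootsA hk hl)

end RowPartition

theorem stmt0 (n : ℕ) :
    (⋃ i, rowPart n i) = rootsA n ∧
    (Pairwise fun i j => Disjoint (rowPart n i) (rowPart n j)) ∧
    (∀ i, RootClosed (rootsA n) (rowPart n i)) ∧
    (∀ i j, i ≠ j → RootClosed (rootsA n) (rowPart n i ∪ rowPart n j)) :=
  ⟨iUnion_rowPart, pairwise_disjoint_rowPart, rootClosed_rowPart,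
    fun _ _ => rootClosed_rowPart_union⟩
end

section
/- In sl(n+1, F) (n ≥ 2, F a field of characteristic 0), the subspaces g_i = span{E_{i+1,j} : 1 ≤ j ≤ n+1, j ≠ i+1} ∪ span{H_i} for 1 ≤ i ≤ n (where H_i = E_{1,1} - E_{i+1,i+1}), together with g_0 = span{E_{1,j} : 2 ≤ j ≤ n+1}, satisfy: each g_i is a Lie subalgebra, each g_i ⊕ g_j is a Lie subalgebra, and sl(n+1,F) = g_0 ⊕ g_1 ⊕ … ⊕ g_n as vector spaces. -/
/-!
Each summand `rowSummand F n i` is the space of traceless matrices supported on row `i` and the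
entry `(0, 0)`, and the sum of the summands over a set `S` of rows is the space of traceless
matrices supported on the rows in `S` and `(0, 0)`: a traceless `M` splits as the sum over `i ∈ S`
of its row `i` corrected by `-M i i` at `(0, 0)`. Matrices supported on a set of rows and `(0, 0)`
are closed under multiplication, hence under brackets; this gives the subalgebra statements, and
`S = univ` gives all of `sl`. A matrix supported both on row `i` and on the other rows lives at
`(0, 0)` alone, so if it is traceless it vanishes: the sum is direct.
-/

open Matrix

attribute [local instance 100] LieRing.ofAssociativeRing

/-- The `i`-th summand of the row decomposition of `sl(n+1, F)`:
for `i = 0` it is spanned by the `E_{1,j}`, `j ≠ 1` (0-indexed: `E_{0,j}`, `j ≠ 0`);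
for `i ≠ 0` it is spanned by the `E_{i,j}`, `j ≠ i`, together with
`H_i = E_{0,0} - E_{i,i}`. -/
def rowSummand (F : Type*) [Field F] (n : ℕ) (i : Fin (n + 1)) :
    Submodule F (Matrix (Fin (n + 1)) (Fin (n + 1)) F) :=
  Submodule.span F
    ({M | ∃ j : Fin (n + 1), j ≠ i ∧ M = single i j (1 : F)} ∪
      (if i = 0 then ∅
        else {single (0 : Fin (n + 1)) 0 (1 : F) - single i i (1 : F)}))

open LieAlgebra.SpecialLinear

namespace Matrix

variable {ι R : Type*} [Fintype ι] [DecidableEq ι] [CommRing R]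

def rowSupported (o : ι) (S : Set ι) : LieSubalgebra R (Matrix ι ι R) where
  carrier := {A | ∀ k l, k ∉ S → A k l ≠ 0 → k = o ∧ l = o}
  zero_mem' := fun _ _ _ h => absurd rfl h
  add_mem' {A B} hA hB k l hk h := by
    by_cases hAkl : A k l = 0
    · exact hB k l hk (by simpa [hAkl] using h)
    · exact hA k l hk hAkl
  smul_mem' c A hA k l hk h := hA k l hk (right_ne_zero_of_mul h)
  lie_mem' {A B} hA hB := by
    -- `A k m * B m l` with `k ∉ S` can only be nonzero for `k = m = o`, and then `B o l` lies in
    -- a row outside `S`: these matrices are even closed under multiplication.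
    have mul_mem : ∀ {A B : Matrix ι ι R}, (∀ k l, k ∉ S → A k l ≠ 0 → k = o ∧ l = o) →
        (∀ k l, k ∉ S → B k l ≠ 0 → k = o ∧ l = o) →
        ∀ k l, k ∉ S → (A * B) k l ≠ 0 → k = o ∧ l = o := by
      intro A B hA hB k l hk h
      obtain ⟨m, -, hm⟩ := Finset.exists_ne_zero_of_sum_ne_zero h
      obtain ⟨hko, hmo⟩ := hA k m hk (left_ne_zero_of_mul hm)
      exact ⟨hko, (hB m l (by rwa [hmo, ← hko]) (right_ne_zero_of_mul hm)).2⟩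
    intro k l hk h
    rw [Ring.lie_def, sub_apply] at h
    by_cases hAB : (A * B) k l = 0
    · exact mul_mem hB hA k l hk (by simpa [hAB] using h)
    · exact mul_mem hA hB k l hk hAB

variable {o : ι} {S T : Set ι}

theorem rowSupported_mono (h : S ⊆ T) : rowSupported (R := R) o S ≤ rowSupported o T :=
  fun _ hA k l hk => hA k l fun hkS => hk (h hkS)

theorem rowSupported_univ : rowSupported (R := R) o Set.univ = ⊤ :=
  eq_top_iff.2 fun _ _ _ _ hk => absurd (Set.mem_univ _) hk

abbrev slRows (o : ι) (S : Set ι) : LieSubalgebra R (Matrix ι ι R) :=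
  rowSupported o S ⊓ sl ι R

theorem mem_slRows {A : Matrix ι ι R} :
    A ∈ slRows o S ↔ A ∈ rowSupported o S ∧ A.trace = 0 := Iff.rfl

theorem slRows_mono (h : S ⊆ T) : slRows (R := R) o S ≤ slRows o T :=
  inf_le_inf_right _ (rowSupported_mono h)

theorem single_mem_slRows {i j : ι} (h : i ≠ j) (c : R) : single i j c ∈ slRows o {i} :=
  ⟨fun k l hk hkl => absurd (by simp_all [single_apply]) hk,
    trace_single_eq_of_ne i j c h⟩

theorem single_sub_single_mem_slRows (i : ι) (c : R) :
    single o o c - single i i c ∈ slRows o {i} := by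
  refine ⟨fun k l hk hkl => ?_, ?_⟩
  · rw [Set.mem_singleton_iff] at hk
    simp only [sub_apply, single_apply, Ne.symm hk, false_and, if_false, sub_zero, ne_eq,
      ite_eq_right_iff, not_forall] at hkl
    obtain ⟨⟨rfl, rfl⟩, -⟩ := hkl
    exact ⟨rfl, rfl⟩
  · show trace _ = 0
    rw [trace_sub, trace_single_eq_same, trace_single_eq_same, sub_self]

theorem disjoint_slRows_rowSupported (h : Disjoint S T) :
    Disjoint (slRows (R := R) o S).toSubmodule (rowSupported o T).toSubmodule := by
  rw [Submodule.disjoint_def]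
  rintro A ⟨hAS, hAtr⟩ hAT
  have hsupp : ∀ k l, A k l ≠ 0 → k = o ∧ l = o := fun k l hkl => by
    by_cases hk : k ∈ S
    · exact hAT k l (Set.disjoint_left.1 h hk) hkl
    · exact hAS k l hk hkl
  have hoo : A o o = 0 := by
    rw [← hAtr]
    exact (Finset.sum_eq_single o (fun k _ hk => by_contra fun h => hk (hsupp k k h).1)
      (by simp)).symm
  ext k l
  by_contra hkl
  obtain ⟨rfl, rfl⟩ := hsupp k l hkl
  exact hkl hoo

def rowPart (o i : ι) (M : Matrix ι ι R) : Matrix ι ι R :=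
  (0 : Matrix ι ι R).updateRow i (M i) - M i i • single o o 1

theorem rowPart_mem_slRows (o i : ι) (M : Matrix ι ι R) : rowPart o i M ∈ slRows o {i} := by
  refine ⟨fun k l hk h => ?_, ?_⟩
  · rw [Set.mem_singleton_iff] at hk
    by_contra hoo
    apply h
    simp only [rowPart, sub_apply, updateRow_apply, hk, if_false, zero_apply, smul_apply,
      single_apply, zero_sub, neg_eq_zero, smul_eq_mul, mul_ite, mul_one, mul_zero]
    exact if_neg fun h => hoo ⟨h.1.symm, h.2.symm⟩
  · show trace _ = 0
    rw [rowPart, trace_sub, trace_smul, trace_single_eq_same]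
    simp [trace, updateRow_apply]

theorem sum_rowPart {S : Finset ι} {M : Matrix ι ι R} (hM : M ∈ slRows o S) :
    ∑ i ∈ S, rowPart o i M = M := by
  obtain ⟨hsupp, htr⟩ := mem_slRows.1 hM
  have htr' : ∑ i ∈ insert o S, M i i = 0 := by
    rw [Finset.sum_subset (Finset.subset_univ _) fun i _ hi => ?_]
    · exact htr
    · rw [Finset.mem_insert, not_or] at hi
      by_contra hii
      exact hi.1 (hsupp i i hi.2 hii).1
  ext k l
  simp only [rowPart, sum_apply, sub_apply, updateRow_apply, zero_apply, smul_apply, smul_eq_mul,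
    Finset.sum_sub_distrib, Finset.sum_ite_eq, ← Finset.sum_mul, single_apply]
  by_cases hkl : k = o ∧ l = o
  · rw [hkl.1, hkl.2]
    by_cases ho : o ∈ S
    · rw [Finset.insert_eq_of_mem ho] at htr'
      simp [ho, htr']
    · rw [Finset.sum_insert ho] at htr'
      simp only [ho, if_false, and_self, if_true, mul_one]
      linear_combination -htr'
  · have hokl : ¬(o = k ∧ o = l) := fun h => hkl ⟨h.1.symm, h.2.symm⟩
    simp only [hokl, if_false, mul_zero, sub_zero]
    split_ifs with hk
    · rfl
    · by_contra h
      exact hkl (hsupp k l hk (Ne.symm h))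

theorem rowPart_eq_sum (o i : ι) (M : Matrix ι ι R) :
    rowPart o i M =
      ∑ l ∈ Finset.univ.erase i, M i l • single i l 1 - M i i • (single o o 1 - single i i 1) := by
  ext k l
  rcases eq_or_ne i k with rfl | hk
  · simp [rowPart, updateRow_apply, sum_apply, single_apply]
    split_ifs <;> ring
  · simp [rowPart, updateRow_apply, sum_apply, single_apply, hk, hk.symm]

end Matrix

section RowSummand

variable {F : Type*} [Field F] {n : ℕ}

theorem rowSummand_eq_slRows (i : Fin (n + 1)) :
    rowSummand F n i = (slRows 0 {i}).toSubmodule := by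
  apply le_antisymm
  · rw [rowSummand, Submodule.span_le]
    rintro M (⟨j, hj, rfl⟩ | hM)
    · exact single_mem_slRows hj.symm 1
    · split_ifs at hM with hi
      · exact absurd hM (Set.notMem_empty M)
      · exact (Set.mem_singleton_iff.1 hM) ▸ single_sub_single_mem_slRows i 1
  · intro M hM
    rw [← Finset.coe_singleton] at hM
    rw [← sum_rowPart hM, Finset.sum_singleton, rowPart_eq_sum]
    refine sub_mem (Submodule.sum_mem _ fun l hl => Submodule.smul_mem _ _
      (Submodule.subset_span (Or.inl ⟨l, Finset.ne_of_mem_erase hl, rfl⟩)))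
      (Submodule.smul_mem _ _ ?_)
    by_cases hi : i = 0
    · simp [hi]
    · exact Submodule.subset_span (Or.inr (by simp [hi]))

theorem biSup_rowSummand_eq_slRows (S : Finset (Fin (n + 1))) :
    ⨆ i ∈ S, rowSummand F n i = (slRows 0 ↑S).toSubmodule := by
  apply le_antisymm
  · refine iSup₂_le fun i hi => ?_
    rw [rowSummand_eq_slRows, LieSubalgebra.toSubmodule_le_toSubmodule]
    exact slRows_mono (by simpa using hi)
  · intro M hM
    rw [← sum_rowPart hM]
    exact Submodule.sum_mem_biSup fun i _ =>
      rowSummand_eq_slRows (F := F) i ▸ rowPart_mem_slRows 0 i M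

end RowSummand

theorem stmt18_general (F : Type*) [Field F] (n : ℕ) :
    (∀ i, ∀ x ∈ rowSummand F n i, ∀ y ∈ rowSummand F n i,
        ⁅x, y⁆ ∈ rowSummand F n i) ∧
    (∀ i j, ∀ x ∈ rowSummand F n i ⊔ rowSummand F n j,
        ∀ y ∈ rowSummand F n i ⊔ rowSummand F n j,
        ⁅x, y⁆ ∈ rowSummand F n i ⊔ rowSummand F n j) ∧
    iSupIndep (rowSummand F n) ∧
    (⨆ i, rowSummand F n i) =
      (LieAlgebra.SpecialLinear.sl (Fin (n + 1)) F).toSubmodule := by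
  have sup_eq : ∀ i j, rowSummand F n i ⊔ rowSummand F n j = (slRows 0 {i, j}).toSubmodule :=
    fun i j => by
      rw [← Finset.coe_pair, ← biSup_rowSummand_eq_slRows, Finset.iSup_insert,
        Finset.iSup_singleton]
  refine ⟨fun i x hx y hy => ?_, fun i j x hx y hy => ?_, fun i => ?_, ?_⟩
  · rw [rowSummand_eq_slRows] at hx hy ⊢
    exact (slRows 0 {i}).lie_mem hx hy
  · rw [sup_eq] at hx hy ⊢
    exact (slRows 0 {i, j}).lie_mem hx hy
  · rw [rowSummand_eq_slRows]
    refine (disjoint_slRows_rowSupported disjoint_compl_right).mono_right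
      (iSup₂_le fun j hj => ?_)
    rw [rowSummand_eq_slRows, LieSubalgebra.toSubmodule_le_toSubmodule]
    exact inf_le_left.trans (rowSupported_mono (Set.singleton_subset_iff.2 hj))
  · simpa [rowSupported_univ] using biSup_rowSummand_eq_slRows (F := F) Finset.univ

theorem stmt18 (F : Type*) [Field F] [CharZero F] (n : ℕ) (hn : 2 ≤ n) :
    (∀ i, ∀ x ∈ rowSummand F n i, ∀ y ∈ rowSummand F n i,
        ⁅x, y⁆ ∈ rowSummand F n i) ∧
    (∀ i j, ∀ x ∈ rowSummand F n i ⊔ rowSummand F n j,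
        ∀ y ∈ rowSummand F n i ⊔ rowSummand F n j,
        ⁅x, y⁆ ∈ rowSummand F n i ⊔ rowSummand F n j) ∧
    iSupIndep (rowSummand F n) ∧
    (⨆ i, rowSummand F n i) =
      (LieAlgebra.SpecialLinear.sl (Fin (n + 1)) F).toSubmodule :=
  stmt18_general F n
end
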